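/- arXiv:1502.01042 — 4 statements merged into one kernel-verified Lean document; each statement's English description precedes it below -/
import Mathlib

section
/- Let F be an algebraically closed field of characteristic 0, and let W ⊆ (F*)^n be an irreducible Zariski closed subset. Then for every natural number m ≥ 1 there exists an irreducible Zariski closed set X ⊆ (F*)^n such that {x^m : x ∈ X} = W, where x^m denotes coordinatewise m-th power. -/
/-!
Among the Zariski closed subsets `X` of the torus with `X^m = W` (the full preimage of `W` is
one), Noetherianity gives a minimal one. Since `x ↦ x^m` maps closed subsets of the torus to
closed subsets, a decomposition `X = C₁ ∪ C₂` gives `W = C₁^m ∪ C₂^m`, so by irreducibility of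
`W` and minimality `X = C₁` or `X = C₂`.

Closedness of images: if `w = x^m` is not in `X^m`, none of the points `ζ x` with `ζ` an
`m`-torsion point of the torus lies in `X`, so by prime avoidance some `p` vanishing on `X` is
nonzero at all of them. The norm `∏_ζ p(ζ ·)` is invariant under these scalings, hence (using a
primitive `m`-th root of unity) a polynomial `r(x^m)`; then `r` vanishes on `X^m` but not at `w`.
-/

def ZarClosed {F : Type*} [Field F] {n : ℕ} (S : Set (Fin n → F)) : Prop :=
  ∃ I : Set (MvPolynomial (Fin n) F), S = {x | ∀ p ∈ I, MvPolynomial.eval x p = 0}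

def unitsSet (F : Type*) [Field F] (n : ℕ) : Set (Fin n → F) := {x | ∀ i, x i ≠ 0}

def ZarClosedIn {F : Type*} [Field F] {n : ℕ} (U S : Set (Fin n → F)) : Prop :=
  ∃ W, ZarClosed W ∧ S = W ∩ U

def IrredIn {F : Type*} [Field F] {n : ℕ} (U S : Set (Fin n → F)) : Prop :=
  S.Nonempty ∧ ∀ C₁ C₂ : Set (Fin n → F), ZarClosedIn U C₁ → ZarClosedIn U C₂ →
    S = C₁ ∪ C₂ → S = C₁ ∨ S = C₂

def powMap {F : Type*} [Field F] {n : ℕ} (m : ℕ) (x : Fin n → F) : Fin n → F :=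
  fun i => x i ^ m

/-- An `m`-th root of an irreducible variety `W ⊆ (F*)^n`: an irreducible Zariski closed
subset `X` of `(F*)^n` with `{x^m : x ∈ X} = W`. -/
def MthRoot {F : Type*} [Field F] {n : ℕ} (m : ℕ) (W X : Set (Fin n → F)) : Prop :=
  ZarClosedIn (unitsSet F n) X ∧ IrredIn (unitsSet F n) X ∧ powMap m '' X = W

open MvPolynomial

namespace MvPolynomial

section Scale

variable {σ R : Type*} [CommSemiring R]

noncomputable def scaleVars (ζ : σ → R) : MvPolynomial σ R →ₐ[R] MvPolynomial σ R :=
  bind₁ fun i => C (ζ i) * X i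

@[simp]
lemma eval_scaleVars (ζ x : σ → R) (p : MvPolynomial σ R) :
    eval x (scaleVars ζ p) = eval (ζ * x) p := by
  rw [← aeval_eq_eval, ← aeval_eq_eval, scaleVars, aeval_bind₁]
  congr 2
  funext i
  simp

lemma scaleVars_scaleVars (η ζ : σ → R) (p : MvPolynomial σ R) :
    scaleVars η (scaleVars ζ p) = scaleVars (η * ζ) p := by
  rw [scaleVars, scaleVars, bind₁_bind₁]
  congr 2
  funext i
  simp only [map_mul, algHom_C, algebraMap_eq, bind₁_X_right, Pi.mul_apply]
  ring

lemma scaleVars_monomial (ζ : σ → R) (d : σ →₀ ℕ) (a : R) :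
    scaleVars ζ (monomial d a) = monomial d ((d.prod fun i k => ζ i ^ k) * a) := by
  rw [scaleVars, bind₁_monomial, monomial_eq, Finsupp.prod]
  simp only [mul_pow, Finset.prod_mul_distrib, ← C_pow, ← map_prod C, C_mul, Finsupp.prod]
  ring

lemma coeff_scaleVars (ζ : σ → R) (p : MvPolynomial σ R) (d : σ →₀ ℕ) :
    coeff d (scaleVars ζ p) = (d.prod fun i k => ζ i ^ k) * coeff d p := by
  classical
  induction p using MvPolynomial.induction_on' with
  | monomial e a =>
    rw [scaleVars_monomial, coeff_monomial, coeff_monomial]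
    split_ifs with h
    · rw [h]
    · rw [mul_zero]
  | add p q hp hq => simp [hp, hq, mul_add]

end Scale

lemma exists_expand_eq_of_dvd {σ R : Type*} [CommSemiring R] {m : ℕ} {q : MvPolynomial σ R}
    (h : ∀ d ∈ q.support, ∀ i, m ∣ d i) : ∃ r, expand m r = q := by
  classical
  refine ⟨∑ d ∈ q.support, monomial (d.mapRange (· / m) (Nat.zero_div m)) (coeff d q), ?_⟩
  conv_rhs => rw [q.as_sum]
  rw [map_sum]
  refine Finset.sum_congr rfl fun d hd => ?_
  have hd' : m • d.mapRange (· / m) (Nat.zero_div m) = d := by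
    ext i
    exact Nat.mul_div_cancel' (h d hd i)
  rw [expand_monomial, hd']

section RootsOfUnity

noncomputable def rootsOfUnityTuples (m : ℕ) (σ F : Type*) [Fintype σ] [DecidableEq σ] [Field F] :
    Finset (σ → F) :=
  Fintype.piFinset fun _ => Polynomial.nthRootsFinset m (1 : F)

variable {σ F : Type*} [Fintype σ] [DecidableEq σ] [Field F] {m : ℕ}

lemma mem_rootsOfUnityTuples (hm : 0 < m) {ζ : σ → F} :
    ζ ∈ rootsOfUnityTuples m σ F ↔ ζ ^ m = 1 := by
  simp [rootsOfUnityTuples, Polynomial.mem_nthRootsFinset hm, _root_.funext_iff (f := ζ ^ m)]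

variable (m) in
noncomputable def rootsOfUnityNorm (p : MvPolynomial σ F) : MvPolynomial σ F :=
  ∏ ζ ∈ rootsOfUnityTuples m σ F, scaleVars ζ p

lemma eval_rootsOfUnityNorm (x : σ → F) (p : MvPolynomial σ F) :
    eval x (rootsOfUnityNorm m p) = ∏ ζ ∈ rootsOfUnityTuples m σ F, eval (ζ * x) p := by
  simp [rootsOfUnityNorm]

lemma scaleVars_rootsOfUnityNorm (hm : 0 < m) {η : σ → F} (hη : η ^ m = 1)
    (p : MvPolynomial σ F) : scaleVars η (rootsOfUnityNorm m p) = rootsOfUnityNorm m p := by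
  have hη₀ : ∀ i, η i ≠ 0 := fun i h => by simpa [h, zero_pow hm.ne'] using congr_fun hη i
  simp only [rootsOfUnityNorm, map_prod, scaleVars_scaleVars]
  refine Finset.prod_nbij' (η * ·) (η⁻¹ * ·) (fun ζ hζ => ?_) (fun ζ hζ => ?_)
    (fun ζ _ => ?_) (fun ζ _ => ?_) fun _ _ => rfl
  · rw [mem_rootsOfUnityTuples hm] at hζ ⊢
    rw [mul_pow, hη, hζ, one_mul]
  · rw [mem_rootsOfUnityTuples hm] at hζ ⊢
    rw [mul_pow, inv_pow, hη, hζ, inv_one, one_mul]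
  · funext i
    exact inv_mul_cancel_left₀ (hη₀ i) (ζ i)
  · funext i
    exact mul_inv_cancel_left₀ (hη₀ i) (ζ i)

lemma dvd_of_mem_support_of_forall_scaleVars_eq {ζ₀ : F} (hζ₀ : IsPrimitiveRoot ζ₀ m)
    {q : MvPolynomial σ F} (hq : ∀ η : σ → F, η ^ m = 1 → scaleVars η q = q)
    {d : σ →₀ ℕ} (hd : d ∈ q.support) (i : σ) : m ∣ d i := by
  refine hζ₀.dvd_of_pow_eq_one _ ?_
  have hη : (Pi.mulSingle i ζ₀ : σ → F) ^ m = 1 := by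
    rw [← Pi.mulSingle_pow, hζ₀.pow_eq_one, Pi.mulSingle_one]
  have hcoeff := congrArg (coeff d) (hq _ hη)
  rw [coeff_scaleVars] at hcoeff
  have hprod := mul_right_cancel₀ (mem_support_iff.mp hd) (hcoeff.trans (one_mul _).symm)
  rwa [Finsupp.prod_pow, Fintype.prod_eq_single i fun j hj => by
    rw [Pi.mulSingle_eq_of_ne hj, one_pow], Pi.mulSingle_eq_same] at hprod

lemma exists_expand_eq_rootsOfUnityNorm (hm : 0 < m) {ζ₀ : F} (hζ₀ : IsPrimitiveRoot ζ₀ m)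
    (p : MvPolynomial σ F) : ∃ r, expand m r = rootsOfUnityNorm m p :=
  exists_expand_eq_of_dvd fun _ hd =>
    dvd_of_mem_support_of_forall_scaleVars_eq hζ₀
      (fun _ hη => scaleVars_rootsOfUnityNorm hm hη p) hd

end RootsOfUnity

lemma exists_mem_vanishingIdeal_forall_eval_ne_zero {σ F : Type*} [Field F] {X : Set (σ → F)}
    (s : Finset (σ → F)) (hs : ∀ y ∈ s, ∃ p ∈ vanishingIdeal F X, eval y p ≠ 0) :
    ∃ p ∈ vanishingIdeal F X, ∀ y ∈ s, eval y p ≠ 0 := by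
  have hnot : ¬ (vanishingIdeal F X : Set (MvPolynomial σ F)) ⊆
      ⋃ y ∈ (s : Set (σ → F)), vanishingIdeal F {y} := by
    rw [Ideal.subset_union_prime 0 0 fun _ _ _ _ => inferInstance]
    rintro ⟨y, hy, hle⟩
    obtain ⟨p, hp, hpy⟩ := hs y hy
    exact hpy (by simpa using (mem_vanishingIdeal_singleton_iff y p).1 (hle hp))
  simpa [Set.not_subset] using hnot

end MvPolynomial

section ZariskiClosed

variable {F : Type*} [Field F] {n k : ℕ}

lemma ZarClosedIn.subset {U X : Set (Fin n → F)} (h : ZarClosedIn U X) : X ⊆ U := by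
  obtain ⟨W, -, rfl⟩ := h
  exact Set.inter_subset_right

lemma zarClosedIn_iff {U X : Set (Fin n → F)} :
    ZarClosedIn U X ↔ X ⊆ U ∧ ∀ x ∈ U, x ∉ X → ∃ p ∈ vanishingIdeal F X, eval x p ≠ 0 := by
  constructor
  · rintro ⟨W, ⟨I, rfl⟩, rfl⟩
    refine ⟨Set.inter_subset_right, fun x hxU hx => ?_⟩
    obtain ⟨p, hp, hpx⟩ : ∃ p ∈ I, eval x p ≠ 0 := by simpa [hxU] using hx
    exact ⟨p, fun y hy => by simpa using hy.1 p hp, hpx⟩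
  · rintro ⟨hXU, hsep⟩
    refine ⟨zeroLocus F (vanishingIdeal F X), ⟨vanishingIdeal F X, by ext; simp⟩, ?_⟩
    refine (Set.subset_inter (zeroLocus_vanishingIdeal_le X) hXU).antisymm ?_
    rintro x ⟨hx, hxU⟩
    by_contra hxX
    obtain ⟨p, hp, hpx⟩ := hsep x hxU hxX
    exact hpx (by simpa using hx p hp)

lemma ZarClosedIn.subset_of_vanishingIdeal_le {U X Y : Set (Fin n → F)} (hY : ZarClosedIn U Y)
    (hXU : X ⊆ U) (h : vanishingIdeal F Y ≤ vanishingIdeal F X) : X ⊆ Y := by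
  intro x hx
  by_contra hxY
  obtain ⟨p, hp, hpx⟩ := (zarClosedIn_iff.1 hY).2 x (hXU hx) hxY
  exact hpx (by simpa using h hp x hx)

lemma exists_minimal_zarClosedIn {U : Set (Fin n → F)} {P : Set (Fin n → F) → Prop}
    (h : ∃ Y, ZarClosedIn U Y ∧ P Y) : ∃ X, Minimal (fun X => ZarClosedIn U X ∧ P X) X := by
  obtain ⟨X, hX, hmax⟩ := (InvImage.wf (vanishingIdeal F) wellFounded_gt).has_min _ h
  refine ⟨X, hX, fun X' hX' hX'X => hX'.1.subset_of_vanishingIdeal_le hX.1.subset ?_⟩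
  by_contra hle
  exact hmax X' hX' (lt_of_le_not_ge (vanishingIdeal_anti_mono hX'X) hle)

lemma irredIn_of_minimal {U : Set (Fin n → F)} {V W : Set (Fin k → F)} {X : Set (Fin n → F)}
    {f : (Fin n → F) → Fin k → F} (hW : IrredIn V W)
    (hf : ∀ C, ZarClosedIn U C → ZarClosedIn V (f '' C))
    (hX : Minimal (fun X => ZarClosedIn U X ∧ f '' X = W) X) : IrredIn U X := by
  have hXW := hX.1.2
  refine ⟨(hXW ▸ hW.1).of_image, fun C₁ C₂ hC₁ hC₂ hX₁₂ => ?_⟩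
  have hW₁₂ : W = f '' C₁ ∪ f '' C₂ := by rw [← hXW, hX₁₂, Set.image_union]
  rcases hW.2 _ _ (hf C₁ hC₁) (hf C₂ hC₂) hW₁₂ with h | h
  · exact Or.inl (hX.eq_of_subset ⟨hC₁, h.symm⟩ (hX₁₂ ▸ Set.subset_union_left)).symm
  · exact Or.inr (hX.eq_of_subset ⟨hC₂, h.symm⟩ (hX₁₂ ▸ Set.subset_union_right)).symm

end ZariskiClosed

section PowMap

variable {F : Type*} [Field F] {n m : ℕ}

lemma powMap_eq_pow (x : Fin n → F) : powMap m x = x ^ m := rfl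

lemma powMap_mem_unitsSet_iff (hm : m ≠ 0) {x : Fin n → F} :
    powMap m x ∈ unitsSet F n ↔ x ∈ unitsSet F n := by
  simp [unitsSet, powMap, hm]

lemma powMap_surjective [IsAlgClosed F] (hm : m ≠ 0) :
    Function.Surjective (powMap m : (Fin n → F) → Fin n → F) := by
  intro w
  choose x hx using fun i => IsAlgClosed.exists_pow_nat_eq (w i) (Nat.pos_of_ne_zero hm)
  exact ⟨x, funext hx⟩

lemma zarClosedIn_preimage_powMap (hm : m ≠ 0) {W : Set (Fin n → F)}
    (hW : ZarClosedIn (unitsSet F n) W) : ZarClosedIn (unitsSet F n) (powMap m ⁻¹' W) := by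
  obtain ⟨-, ⟨I, rfl⟩, rfl⟩ := hW
  refine ⟨_, ⟨expand m '' I, rfl⟩, ?_⟩
  ext x
  rw [Set.mem_preimage, Set.mem_inter_iff, Set.mem_inter_iff, powMap_mem_unitsSet_iff hm]
  simp [powMap_eq_pow]

theorem ZarClosedIn.image_powMap [IsAlgClosed F] (hm : (m : F) ≠ 0) {X : Set (Fin n → F)}
    (hX : ZarClosedIn (unitsSet F n) X) : ZarClosedIn (unitsSet F n) (powMap m '' X) := by
  classical
  have hm₀ : 0 < m := Nat.pos_of_ne_zero (by rintro rfl; simp at hm)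
  have : NeZero (m : F) := ⟨hm⟩
  obtain ⟨ζ₀, hζ₀⟩ := HasEnoughRootsOfUnity.exists_primitiveRoot F m
  rw [zarClosedIn_iff] at hX ⊢
  refine ⟨?_, fun w hwU hw => ?_⟩
  · rintro _ ⟨x, hx, rfl⟩
    exact (powMap_mem_unitsSet_iff hm₀.ne').2 (hX.1 hx)
  obtain ⟨x, rfl⟩ := powMap_surjective hm₀.ne' w
  have hsep : ∀ y ∈ (rootsOfUnityTuples m (Fin n) F).image (· * x),
      ∃ p ∈ vanishingIdeal F X, eval y p ≠ 0 := by
    simp only [Finset.forall_mem_image]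
    intro ζ hζ
    rw [mem_rootsOfUnityTuples hm₀] at hζ
    have hζx : powMap m (ζ * x) = powMap m x := by
      rw [powMap_eq_pow, powMap_eq_pow, mul_pow, hζ, one_mul]
    refine hX.2 _ ?_ fun hmem => hw ⟨_, hmem, hζx⟩
    rwa [← powMap_mem_unitsSet_iff hm₀.ne', hζx]
  obtain ⟨p, hpX, hp⟩ := exists_mem_vanishingIdeal_forall_eval_ne_zero _ hsep
  obtain ⟨r, hr⟩ := exists_expand_eq_rootsOfUnityNorm hm₀ hζ₀ p
  refine ⟨r, ?_, ?_⟩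
  · rintro _ ⟨y, hy, rfl⟩
    rw [aeval_eq_eval, powMap_eq_pow, ← eval_expand, hr, eval_rootsOfUnityNorm]
    refine Finset.prod_eq_zero ((mem_rootsOfUnityTuples hm₀).2 (one_pow m)) ?_
    simpa using hpX y hy
  · rw [powMap_eq_pow, ← eval_expand, hr, eval_rootsOfUnityNorm]
    exact Finset.prod_ne_zero_iff.2 fun ζ hζ => hp _ (Finset.mem_image_of_mem _ hζ)

end PowMap

/-- Every irreducible Zariski closed subset of `(F*)^n` has an `m`-th root for every `m ≥ 1`. -/
theorem roots_exist {F : Type*} [Field F] [IsAlgClosed F] [CharZero F] {n : ℕ}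
    (W : Set (Fin n → F)) (hWc : ZarClosedIn (unitsSet F n) W)
    (hWi : IrredIn (unitsSet F n) W) (m : ℕ) (hm : 1 ≤ m) :
    ∃ X : Set (Fin n → F), MthRoot m W X := by
  have hm₀ : m ≠ 0 := Nat.one_le_iff_ne_zero.mp hm
  obtain ⟨X, hX⟩ := exists_minimal_zarClosedIn (P := fun X => powMap m '' X = W)
    ⟨_, zarClosedIn_preimage_powMap hm₀ hWc, Set.image_preimage_eq W (powMap_surjective hm₀)⟩
  have hpow : ∀ C, ZarClosedIn (unitsSet F n) C → ZarClosedIn (unitsSet F n) (powMap m '' C) :=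
    fun _ hC => hC.image_powMap (Nat.cast_ne_zero.2 hm₀)
  exact ⟨X, hX.1.1, irredIn_of_minimal hWi hpow hX, hX.1.2⟩
end

section
/- Let exp : V → F* be a cover of the multiplicative group of an algebraically closed field F of characteristic 0, let T ⊆ (F*)^n be an irreducible torus and L ⊆ V^n an affine ℚ-subspace with exp(L) = T. Then for each m ≥ 1, exp(L/m) = exp({v/m : v ∈ L}) equals a single m-th root of T: i.e., exp(L/m) is an irreducible torus X with X^m = T. -/
/-- A torus in `(F*)^n`: a set cut out by equations `∏ i, x i ^ z i = c` with `z : Fin n → ℤ`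
and `c ∈ F*`. -/
def IsTorus {F : Type*} [Field F] {n : ℕ} (T : Set (Fin n → F)) : Prop :=
  ∃ E : Set ((Fin n → ℤ) × F), (∀ p ∈ E, p.2 ≠ 0) ∧
    T = {x | (∀ i, x i ≠ 0) ∧ ∀ p ∈ E, (∏ i, x i ^ p.1 i) = p.2}

def ZarIrred {F : Type*} [Field F] {n : ℕ} (S : Set (Fin n → F)) : Prop :=
  S.Nonempty ∧ ∀ C₁ C₂ : Set (Fin n → F), ZarClosed C₁ → ZarClosed C₂ →
    S = C₁ ∪ C₂ → S = C₁ ∨ S = C₂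

/-- The Zariski closure of a set: the intersection of all Zariski closed sets containing it. -/
def zclosure {F : Type*} [Field F] {n : ℕ} (S : Set (Fin n → F)) : Set (Fin n → F) :=
  ⋂₀ {W | ZarClosed W ∧ S ⊆ W}

/-- An affine subspace of `V^n` over `ℚ`: a coset of a `ℚ`-linear subspace. -/
def IsAffSub {V : Type*} [AddCommGroup V] [Module ℚ V] {n : ℕ} (L : Set (Fin n → V)) : Prop :=
  ∃ (U : Submodule ℚ (Fin n → V)) (v₀ : Fin n → V), L = (fun u => v₀ + u) '' (U : Set (Fin n → V))

/-- The image of a subset of `V^n` under the coordinatewise map `exp`. -/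
def expImg {V F : Type*} (e : V → F) {n : ℕ} (L : Set (Fin n → V)) : Set (Fin n → F) :=
  (fun v i => e (v i)) '' L

/-!
Write `L = v₀ + U` with `U` a `ℚ`-subspace. Then `L/m = (v₀/m - v₀) + L` is a translate of `L`,
so `exp(L/m)` is the image of `T` under coordinatewise multiplication by the point
`exp(v₀/m - v₀)` of `(F*)^n`. This multiplication is a Zariski automorphism of `F^n` that maps
tori to tori, hence `exp(L/m)` is a torus with irreducible closure. Finally
`exp(v/m)^m = exp(v)` gives `exp(L/m)^m = exp(L) = T`.
-/

open scoped Pointwise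

section Zariski

variable {F : Type*} [Field F] {n : ℕ}

theorem zarClosed_zclosure (S : Set (Fin n → F)) : ZarClosed (zclosure S) := by
  refine ⟨{p | ∀ s ∈ S, MvPolynomial.eval s p = 0}, subset_antisymm ?_ ?_⟩
  · exact fun x hx p hp => hx {y | MvPolynomial.eval y p = 0} ⟨⟨{p}, by ext; simp⟩, hp⟩
  · rintro x hx W ⟨⟨I, rfl⟩, hSW⟩ p hp
    exact hx p fun s hs => hSW hs p hp

theorem ZarClosed.preimage_polynomial {k : ℕ} (P : Fin n → MvPolynomial (Fin k) F)
    {W : Set (Fin n → F)} (hW : ZarClosed W) :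
    ZarClosed ((fun x i => MvPolynomial.eval x (P i)) ⁻¹' W) := by
  obtain ⟨I, rfl⟩ := hW
  refine ⟨MvPolynomial.bind₁ P '' I, ?_⟩
  ext x
  simp only [Set.mem_preimage, Set.mem_ofPred_eq, Set.forall_mem_image]
  refine forall₂_congr fun p _ => ?_
  rw [iff_comm, MvPolynomial.eval, MvPolynomial.eval₂Hom_bind₁]
  rfl

variable (φ : (Fin n → F) ≃ (Fin n → F))

theorem zclosure_image_equiv (hφ : ∀ W, ZarClosed W → ZarClosed (φ ⁻¹' W))
    (hφ_symm : ∀ W, ZarClosed W → ZarClosed (φ.symm ⁻¹' W)) (S : Set (Fin n → F)) :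
    zclosure (φ '' S) = φ '' zclosure S := by
  apply subset_antisymm
  · refine Set.sInter_subset_of_mem ⟨?_, Set.image_mono fun x hx W hW => hW.2 hx⟩
    rw [φ.image_eq_preimage_symm]
    exact hφ_symm _ (zarClosed_zclosure S)
  · rintro _ ⟨x, hx, rfl⟩ W ⟨hW, hSW⟩
    exact hx _ ⟨hφ W hW, Set.image_subset_iff.mp hSW⟩

theorem ZarIrred.image_equiv (hφ : ∀ W, ZarClosed W → ZarClosed (φ ⁻¹' W))
    {Z : Set (Fin n → F)} (hZ : ZarIrred Z) : ZarIrred (φ '' Z) := by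
  refine ⟨hZ.1.image φ, fun C₁ C₂ hC₁ hC₂ hC => ?_⟩
  have hZC : Z = φ ⁻¹' C₁ ∪ φ ⁻¹' C₂ := by rw [← Set.preimage_union, ← hC, φ.preimage_image]
  rcases hZ.2 _ _ (hφ _ hC₁) (hφ _ hC₂) hZC with h | h
  · left; rw [h, φ.image_preimage]
  · right; rw [h, φ.image_preimage]

end Zariski

section Scaling

variable {F : Type*} [Field F] {n : ℕ}

def scale (d : Fin n → Fˣ) : (Fin n → F) ≃ (Fin n → F) :=
  Equiv.piCongrRight fun i => Units.mulLeft (d i)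

@[simp]
theorem scale_apply (d : Fin n → Fˣ) (x : Fin n → F) (i : Fin n) : scale d x i = d i * x i :=
  rfl

theorem scale_symm (d : Fin n → Fˣ) : (scale d).symm = scale (F := F) d⁻¹ :=
  rfl

theorem ZarClosed.preimage_scale (d : Fin n → Fˣ) {W : Set (Fin n → F)} (hW : ZarClosed W) :
    ZarClosed (scale d ⁻¹' W) := by
  convert hW.preimage_polynomial fun i => MvPolynomial.C (d i : F) * MvPolynomial.X i
  simp

theorem IsTorus.image_scale (d : Fin n → Fˣ) {T : Set (Fin n → F)} (hT : IsTorus T) :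
    IsTorus (scale d '' T) := by
  obtain ⟨E, hE, rfl⟩ := hT
  have hd : ∀ z : Fin n → ℤ, ∏ i, (d i : F) ^ z i ≠ 0 := fun z =>
    Finset.prod_ne_zero_iff.mpr fun i _ => zpow_ne_zero _ (d i).ne_zero
  refine ⟨(fun p => (p.1, (∏ i, (d i : F) ^ p.1 i) * p.2)) '' E, ?_, ?_⟩
  · rintro _ ⟨p, hp, rfl⟩
    exact mul_ne_zero (hd p.1) (hE p hp)
  · ext x
    simp only [(scale d).image_eq_preimage_symm, scale_symm, Set.mem_preimage, Set.mem_ofPred_eq,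
      scale_apply, Set.forall_mem_image, mul_zpow, Finset.prod_mul_distrib, Pi.inv_apply,
      Units.val_inv_eq_inv_val, inv_zpow, Finset.prod_inv_distrib]
    refine and_congr (forall_congr' fun i => by simp) (forall₂_congr fun p _ => ?_)
    exact inv_mul_eq_iff_eq_mul₀ (hd p.1)

end Scaling

section Cover

variable {V F : Type*} [AddCommGroup V] [Field F] {e : V → F}

theorem map_zero_eq_one_of_map_add (h0 : e 0 ≠ 0) (hadd : ∀ v w, e (v + w) = e v * e w) :
    e 0 = 1 :=
  (mul_eq_left₀ h0).mp (by rw [← hadd, add_zero])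

theorem powMap_image_expImg [Module ℚ V] (h0 : e 0 ≠ 0)
    (hadd : ∀ v w, e (v + w) = e v * e w) {n : ℕ} (m : ℕ) (S : Set (Fin n → V)) :
    powMap m '' expImg e S = expImg e ((m : ℚ) • S) := by
  let ψ : AddChar V F := ⟨e, map_zero_eq_one_of_map_add h0 hadd, hadd⟩
  rw [expImg, expImg, ← Set.image_smul, Set.image_image, Set.image_image]
  refine Set.image_congr fun v _ => funext fun i => ?_
  simp only [powMap, Pi.smul_apply, Nat.cast_smul_eq_nsmul]
  exact (ψ.map_nsmul_eq_pow m (v i)).symm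

theorem expImg_image_add (hne : ∀ v, e v ≠ 0) (hadd : ∀ v w, e (v + w) = e v * e w) {n : ℕ}
    (c : Fin n → V) (S : Set (Fin n → V)) :
    expImg e ((c + ·) '' S) = scale (fun i => Units.mk0 (e (c i)) (hne _)) '' expImg e S := by
  rw [expImg, expImg, Set.image_image, Set.image_image]
  exact Set.image_congr fun v _ => funext fun i => hadd (c i) (v i)

end Cover

theorem IsAffSub.smul_eq_image_add {V : Type*} [AddCommGroup V] [Module ℚ V] {n : ℕ}
    {L : Set (Fin n → V)} (hL : IsAffSub L) {q : ℚ} (hq : q ≠ 0) :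
    ∃ c, q • L = (c + ·) '' L := by
  obtain ⟨U, v₀, rfl⟩ := hL
  refine ⟨q • v₀ - v₀, ?_⟩
  ext x
  simp only [Set.mem_smul_set, Set.image_image, Set.mem_image, SetLike.mem_coe]
  constructor
  · rintro ⟨_, ⟨u, hu, rfl⟩, rfl⟩
    exact ⟨q • u, U.smul_mem q hu, by rw [smul_add]; abel⟩
  · rintro ⟨u, hu, rfl⟩
    refine ⟨v₀ + q⁻¹ • u, ⟨q⁻¹ • u, U.smul_mem _ hu, rfl⟩, ?_⟩
    rw [smul_add, smul_inv_smul₀ hq]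
    abel

theorem expImg_div_is_single_root_general {V F : Type*} [AddCommGroup V] [Module ℚ V] [Field F]
    (e : V → F)
    (hne : ∀ v, e v ≠ 0) (hadd : ∀ v w, e (v + w) = e v * e w)
    {n : ℕ} (T : Set (Fin n → F)) (hT : IsTorus T) (hTirr : ZarIrred (zclosure T))
    (L : Set (Fin n → V)) (hL : IsAffSub L) (hLT : expImg e L = T)
    (m : ℕ) (hm : 1 ≤ m) :
    IsTorus (expImg e {v | ∃ w ∈ L, v = ((m : ℚ))⁻¹ • w}) ∧
    ZarIrred (zclosure (expImg e {v | ∃ w ∈ L, v = ((m : ℚ))⁻¹ • w})) ∧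
    powMap m '' expImg e {v | ∃ w ∈ L, v = ((m : ℚ))⁻¹ • w} = T := by
  have hm₀ : (m : ℚ) ≠ 0 := Nat.cast_ne_zero.mpr (by omega)
  have hdiv : {v | ∃ w ∈ L, v = ((m : ℚ))⁻¹ • w} = (m : ℚ)⁻¹ • L := by
    ext v
    simp [Set.mem_smul_set, eq_comm]
  obtain ⟨c, hc⟩ := hL.smul_eq_image_add (inv_ne_zero hm₀)
  set d : Fin n → Fˣ := fun i => Units.mk0 (e (c i)) (hne _)
  have hX : expImg e ((m : ℚ)⁻¹ • L) = scale d '' T := by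
    rw [hc, expImg_image_add hne hadd, hLT]
  rw [hdiv]
  refine ⟨hX ▸ hT.image_scale d, ?_, ?_⟩
  · rw [hX, zclosure_image_equiv _ (fun _ => .preimage_scale d) (fun _ => .preimage_scale d⁻¹)]
    exact hTirr.image_equiv _ fun _ => .preimage_scale d
  · rw [powMap_image_expImg (hne 0) hadd, smul_smul, mul_inv_cancel₀ hm₀, one_smul, hLT]

/-- If `T` is an irreducible torus and `L` an affine `ℚ`-subspace with `exp(L) = T`, then for
each `m ≥ 1` the set `exp(L/m)` is a single `m`-th root of `T`: an irreducible torus `X` with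
`X^m = T`. -/
theorem expImg_div_is_single_root {V F : Type*} [AddCommGroup V] [Module ℚ V] [Field F]
    [IsAlgClosed F] [CharZero F] (e : V → F)
    (hne : ∀ v, e v ≠ 0) (hadd : ∀ v w, e (v + w) = e v * e w)
    (hsurj : ∀ y : F, y ≠ 0 → ∃ v, e v = y)
    {n : ℕ} (T : Set (Fin n → F)) (hT : IsTorus T) (hTirr : ZarIrred (zclosure T))
    (L : Set (Fin n → V)) (hL : IsAffSub L) (hLT : expImg e L = T)
    (m : ℕ) (hm : 1 ≤ m) :
    IsTorus (expImg e {v | ∃ w ∈ L, v = ((m : ℚ))⁻¹ • w}) ∧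
    ZarIrred (zclosure (expImg e {v | ∃ w ∈ L, v = ((m : ℚ))⁻¹ • w})) ∧
    powMap m '' expImg e {v | ∃ w ∈ L, v = ((m : ℚ))⁻¹ • w} = T :=
  expImg_div_is_single_root_general e hne hadd T hT hTirr L hL hLT m hm
end

section
/- Let F be an algebraically closed field and W ⊆ (F*)^n an irreducible Zariski closed set. Let T be the minimal torus containing W (possibly (F*)^n itself). Then W can be written as W = W' ∩ T, where W' is an irreducible Zariski closed set that is not contained in any proper torus. -/
/-!
Write `x ^ z = ∏ i, x i ^ z i` for the characters of `(F*)^n` and fix `a ∈ W`. The characters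
constant on `W` form a lattice `L ⊆ ℤ^n`, and the minimal torus containing `W` is the coset
`T = {x | x ^ z = a ^ z for z ∈ L}`. The lattice is saturated: if `x ^ (k • z)` is constant on `W`,
then `x ^ z` takes finitely many values on `W`, and irreducibility forces a single one. Hence
`ℤ^n ⧸ L` is free and there is a projection `P` of `ℤ^n` with kernel `L`. The monomial map
`Ψ x = a ^ (1 - P) * x ^ P` retracts `(F*)^n` onto `T`, and `W' = Ψ⁻¹ W` works: it is `W * V` for
the subtorus `V = {y ^ (1 - P)}`, hence irreducible as an image of `W × (F*)^n`; it meets `T` in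
`W`; and a character constant on `W'` lies in `L` and is trivial on `V`, hence trivial.
-/

open Pointwise

theorem Submodule.exists_projection_of_saturated {R M : Type*} [CommRing R] [IsDomain R]
    [IsPrincipalIdealRing R] [AddCommGroup M] [Module R M] [Module.Finite R M]
    (L : Submodule R M) (hL : ∀ (r : R) (m : M), r ≠ 0 → r • m ∈ L → m ∈ L) :
    ∃ P : M →ₗ[R] M, (∀ m ∈ L, P m = 0) ∧ ∀ m, m - P m ∈ L := by
  have : Module.IsTorsionFree R (M ⧸ L) := .of_smul_eq_zero fun r q hrq => by
    obtain ⟨m, rfl⟩ := L.mkQ_surjective q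
    refine or_iff_not_imp_left.2 fun hr => ?_
    simp only [Submodule.mkQ_apply, ← Submodule.Quotient.mk_smul,
      Submodule.Quotient.mk_eq_zero] at hrq ⊢
    exact hL r m hr hrq
  have : Module.Free R (M ⧸ L) := Module.free_of_finite_type_torsion_free'
  obtain ⟨s, hs⟩ := Module.projective_lifting_property L.mkQ LinearMap.id L.mkQ_surjective
  refine ⟨s ∘ₗ L.mkQ, fun m hm => by simp [(Submodule.Quotient.mk_eq_zero L).2 hm], fun m => ?_⟩
  refine (Submodule.Quotient.mk_eq_zero L).1 ?_
  have h := LinearMap.congr_fun hs (L.mkQ m)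
  simp only [LinearMap.comp_apply, LinearMap.id_apply, Submodule.mkQ_apply] at h ⊢
  rw [Submodule.Quotient.mk_sub, h, sub_self]

section

variable {F : Type*} [Field F] {n : ℕ}

namespace ZarClosedIn

variable {U S T : Set (Fin n → F)}

theorem subset_s11 (h : ZarClosedIn U S) : S ⊆ U := by
  obtain ⟨V, _, rfl⟩ := h
  exact Set.inter_subset_right

theorem self (U : Set (Fin n → F)) : ZarClosedIn U U :=
  ⟨Set.univ, ⟨∅, by simp⟩, (Set.univ_inter U).symm⟩

theorem empty (U : Set (Fin n → F)) : ZarClosedIn U ∅ :=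
  ⟨∅, ⟨{1}, by ext; simp⟩, by simp⟩

theorem iInter {ι : Sort*} [Nonempty ι] {D : ι → Set (Fin n → F)}
    (h : ∀ i, ZarClosedIn U (D i)) : ZarClosedIn U (⋂ i, D i) := by
  choose V hV hD using h
  choose I hI using hV
  refine ⟨_, ⟨⋃ i, I i, rfl⟩, ?_⟩
  ext x
  simp only [hD, hI, Set.mem_iInter, Set.mem_inter_iff, Set.mem_ofPred_eq, Set.mem_iUnion,
    forall_exists_index]
  exact ⟨fun h => ⟨fun p i hp => (h i).1 p hp, (h (Classical.arbitrary ι)).2⟩,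
    fun h i => ⟨fun p hp => h.1 p i hp, h.2⟩⟩

theorem inter (hS : ZarClosedIn U S) (hT : ZarClosedIn U T) : ZarClosedIn U (S ∩ T) := by
  rw [Set.inter_eq_iInter]
  exact iInter fun b => by cases b <;> assumption

theorem union (hS : ZarClosedIn U S) (hT : ZarClosedIn U T) : ZarClosedIn U (S ∪ T) := by
  obtain ⟨V, ⟨I, rfl⟩, rfl⟩ := hS
  obtain ⟨V', ⟨I', rfl⟩, rfl⟩ := hT
  refine ⟨_, ⟨Set.image2 (· * ·) I I', rfl⟩, ?_⟩
  ext x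
  simp only [Set.mem_union, Set.mem_inter_iff, Set.mem_ofPred_eq, Set.forall_mem_image2,
    map_mul, mul_eq_zero]
  constructor
  · rintro (⟨h, hx⟩ | ⟨h, hx⟩)
    exacts [⟨fun p hp _ _ => Or.inl (h p hp), hx⟩, ⟨fun _ _ q hq => Or.inr (h q hq), hx⟩]
  · rintro ⟨h, hx⟩
    by_cases hI : ∀ p ∈ I, MvPolynomial.eval x p = 0
    · exact Or.inl ⟨hI, hx⟩
    · push Not at hI
      obtain ⟨p, hp, hpx⟩ := hI
      exact Or.inr ⟨fun q hq => (h p hp q hq).resolve_left hpx, hx⟩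

theorem biUnion {ι : Type*} (s : Finset ι) {C : ι → Set (Fin n → F)}
    (h : ∀ i ∈ s, ZarClosedIn U (C i)) : ZarClosedIn U (⋃ i ∈ s, C i) := by
  classical
  induction s using Finset.induction with
  | empty => simpa using empty U
  | insert a s _ ih =>
    rw [Finset.set_biUnion_insert]
    exact (h a (s.mem_insert_self a)).union (ih fun i hi => h i (Finset.mem_insert_of_mem hi))

theorem exists_ne_zero_eval_eq_zero {C : Set (Fin n → F)} (hC : ZarClosedIn U C) (hne : C ≠ U) :
    ∃ p : MvPolynomial (Fin n) F, p ≠ 0 ∧ ∀ x ∈ C, MvPolynomial.eval x p = 0 := by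
  obtain ⟨V, ⟨I, rfl⟩, rfl⟩ := hC
  obtain ⟨x, hxU, hxC⟩ := Set.exists_of_ssubset (Set.inter_subset_right.ssubset_of_ne hne)
  have : ¬ ∀ p ∈ I, MvPolynomial.eval x p = 0 := fun h => hxC ⟨h, hxU⟩
  push Not at this
  obtain ⟨p, hp, hpx⟩ := this
  exact ⟨p, fun h => hpx (by simp [h]), fun y hy => hy.1 p hp⟩

end ZarClosedIn

def ZarContinuous (U : Set (Fin n → F)) (g : (Fin n → F) → Fin n → F) : Prop :=
  ∀ C, ZarClosedIn U C → ZarClosedIn U (U ∩ g ⁻¹' C)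

namespace IrredIn

variable {U X Y : Set (Fin n → F)}

theorem subset_or_subset (hX : IrredIn U X) (hXc : ZarClosedIn U X) {C₁ C₂ : Set (Fin n → F)}
    (h₁ : ZarClosedIn U C₁) (h₂ : ZarClosedIn U C₂) (h : X ⊆ C₁ ∪ C₂) : X ⊆ C₁ ∨ X ⊆ C₂ := by
  have hcover : X = X ∩ C₁ ∪ X ∩ C₂ := by
    rw [← Set.inter_union_distrib_left, Set.inter_eq_self_of_subset_left h]
  exact (hX.2 _ _ (hXc.inter h₁) (hXc.inter h₂) hcover).imp
    (fun e => Set.inter_eq_left.1 e.symm) (fun e => Set.inter_eq_left.1 e.symm)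

theorem exists_subset_of_subset_biUnion (hX : IrredIn U X) (hXc : ZarClosedIn U X) {ι : Type*}
    (s : Finset ι) {C : ι → Set (Fin n → F)} (hC : ∀ i ∈ s, ZarClosedIn U (C i))
    (h : X ⊆ ⋃ i ∈ s, C i) : ∃ i ∈ s, X ⊆ C i := by
  classical
  induction s using Finset.induction with
  | empty =>
    obtain ⟨x, hx⟩ := hX.1
    simpa using h hx
  | insert a s _ ih =>
    rw [Finset.set_biUnion_insert] at h
    have hCs : ∀ i ∈ s, ZarClosedIn U (C i) := fun i hi => hC i (Finset.mem_insert_of_mem hi)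
    rcases hX.subset_or_subset hXc (hC a (s.mem_insert_self a)) (ZarClosedIn.biUnion s hCs) h
      with h | h
    · exact ⟨a, s.mem_insert_self a, h⟩
    · obtain ⟨i, hi, hXi⟩ := ih hCs h
      exact ⟨i, Finset.mem_insert_of_mem hi, hXi⟩

theorem image2 (hX : IrredIn U X) (hXc : ZarClosedIn U X) (hY : IrredIn U Y)
    (hYc : ZarClosedIn U Y) {f : (Fin n → F) → (Fin n → F) → Fin n → F}
    (hf₁ : ∀ y ∈ Y, ZarContinuous U (f · y)) (hf₂ : ∀ x ∈ X, ZarContinuous U (f x)) :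
    IrredIn U (Set.image2 f X Y) := by
  refine ⟨hX.1.image2 hY.1, fun C₁ C₂ h₁ h₂ hS => ?_⟩
  have : Nonempty Y := hY.1.to_subtype
  have hfibre : ∀ C, ZarClosedIn U C → ZarClosedIn U {x ∈ X | ∀ y ∈ Y, f x y ∈ C} := by
    intro C hC
    convert hXc.inter (ZarClosedIn.iInter fun y : Y => hf₁ y y.2 C hC) using 1
    ext x
    simp only [Set.mem_inter_iff, Set.mem_iInter, Set.mem_preimage, Subtype.forall,
      Set.mem_ofPred_eq]
    exact ⟨fun h => ⟨h.1, fun y hy => ⟨hXc.subset_s11 h.1, h.2 y hy⟩⟩,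
      fun h => ⟨h.1, fun y hy => (h.2 y hy).2⟩⟩
  have hcover : X ⊆ {x ∈ X | ∀ y ∈ Y, f x y ∈ C₁} ∪ {x ∈ X | ∀ y ∈ Y, f x y ∈ C₂} := by
    intro x hx
    have hfx : Y ⊆ (U ∩ f x ⁻¹' C₁) ∪ (U ∩ f x ⁻¹' C₂) := fun y hy =>
      (show f x y ∈ C₁ ∪ C₂ from hS ▸ Set.mem_image2_of_mem hx hy).imp
        (⟨hYc.subset_s11 hy, ·⟩) (⟨hYc.subset_s11 hy, ·⟩)
    rcases hY.subset_or_subset hYc (hf₂ x hx C₁ h₁) (hf₂ x hx C₂ h₂) hfx with h | h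
    · exact Or.inl ⟨hx, fun y hy => (h hy).2⟩
    · exact Or.inr ⟨hx, fun y hy => (h hy).2⟩
  have himage : ∀ C, C ⊆ Set.image2 f X Y → X ⊆ {x ∈ X | ∀ y ∈ Y, f x y ∈ C} →
      Set.image2 f X Y = C :=
    fun C hC hXC => (Set.image2_subset_iff.2 fun x hx y hy => (hXC hx).2 y hy).antisymm hC
  rcases hX.subset_or_subset hXc (hfibre C₁ h₁) (hfibre C₂ h₂) hcover with h | h
  · exact Or.inl (himage C₁ (hS ▸ Set.subset_union_left) h)
  · exact Or.inr (himage C₂ (hS ▸ Set.subset_union_right) h)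

end IrredIn

theorem irredIn_unitsSet [Infinite F] : IrredIn (unitsSet F n) (unitsSet F n) := by
  refine ⟨⟨1, fun _ => one_ne_zero⟩, fun C₁ C₂ h₁ h₂ hU => ?_⟩
  by_contra! hne
  obtain ⟨p, hp, hpC⟩ := h₁.exists_ne_zero_eval_eq_zero hne.1.symm
  obtain ⟨q, hq, hqC⟩ := h₂.exists_ne_zero_eval_eq_zero hne.2.symm
  -- `p * q` vanishes on `(F*)^n` and `∏ i, X i` off it
  have hzero : p * q * ∏ i, MvPolynomial.X i = 0 := MvPolynomial.funext fun x => by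
    simp only [map_mul, map_prod, MvPolynomial.eval_X, map_zero, mul_eq_zero,
      Finset.prod_eq_zero_iff, Finset.mem_univ, true_and]
    by_cases hx : x ∈ unitsSet F n
    · rcases (hU ▸ hx : x ∈ C₁ ∪ C₂) with hx | hx
      · exact Or.inl (Or.inl (hpC x hx))
      · exact Or.inl (Or.inr (hqC x hx))
    · simp only [unitsSet, Set.mem_ofPred_eq, not_forall, not_not] at hx
      exact Or.inr hx
  exact mul_ne_zero (mul_ne_zero hp hq)
    (Finset.prod_ne_zero_iff.2 fun i _ => MvPolynomial.X_ne_zero i) hzero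

def character (z : Fin n → ℤ) (x : Fin n → F) : F := ∏ i, x i ^ z i

section Character

variable {x : Fin n → F}

theorem character_ne_zero (z : Fin n → ℤ) (hx : x ∈ unitsSet F n) : character z x ≠ 0 :=
  Finset.prod_ne_zero_iff.2 fun i _ => zpow_ne_zero _ (hx i)

@[simp]
theorem character_zero (x : Fin n → F) : character 0 x = 1 := by simp [character]

theorem character_add (hx : x ∈ unitsSet F n) (z w : Fin n → ℤ) :
    character (z + w) x = character z x * character w x := by
  simp only [character, ← Finset.prod_mul_distrib, Pi.add_apply, zpow_add₀ (hx _)]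

theorem character_sum (hx : x ∈ unitsSet F n) {ι : Type*} (s : Finset ι) (g : ι → Fin n → ℤ) :
    character (∑ j ∈ s, g j) x = ∏ j ∈ s, character (g j) x := by
  classical
  induction s using Finset.induction with
  | empty => simp
  | insert j s hj ih => rw [Finset.sum_insert hj, character_add hx, Finset.prod_insert hj, ih]

theorem character_smul (k : ℤ) (z : Fin n → ℤ) (x : Fin n → F) :
    character (k • z) x = character z x ^ k := by
  simp only [character, ← Finset.prod_zpow, Pi.smul_apply, smul_eq_mul, mul_comm k, zpow_mul]

theorem character_single (i : Fin n) (x : Fin n → F) : character (Pi.single i 1) x = x i := by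
  rw [character, Finset.prod_eq_single i (fun j _ hj => by simp [Pi.single_eq_of_ne hj])
    (by simp)]
  simp

theorem character_mul (z : Fin n → ℤ) (x y : Fin n → F) :
    character z (x * y) = character z x * character z y := by
  simp only [character, ← Finset.prod_mul_distrib, Pi.mul_apply, mul_zpow]

theorem character_inv (z : Fin n → ℤ) (x : Fin n → F) : character z x⁻¹ = (character z x)⁻¹ := by
  simp only [character, ← Finset.prod_inv_distrib, Pi.inv_apply, inv_zpow]

@[simp]
theorem character_one (z : Fin n → ℤ) : character z (1 : Fin n → F) = 1 := by simp [character]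

end Character

def monomialMap (A : (Fin n → ℤ) →ₗ[ℤ] Fin n → ℤ) (x : Fin n → F) : Fin n → F :=
  fun i => character (A (Pi.single i 1)) x

section MonomialMap

variable (A B : (Fin n → ℤ) →ₗ[ℤ] Fin n → ℤ) {x : Fin n → F}

theorem monomialMap_mem_unitsSet (hx : x ∈ unitsSet F n) : monomialMap A x ∈ unitsSet F n :=
  fun _ => character_ne_zero _ hx

theorem character_monomialMap (hx : x ∈ unitsSet F n) (z : Fin n → ℤ) :
    character z (monomialMap A x) = character (A z) x := by
  conv_rhs => rw [pi_eq_sum_univ' z]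
  rw [map_sum, character_sum hx]
  exact Finset.prod_congr rfl fun i _ => by rw [map_zsmul, character_smul]; rfl

theorem monomialMap_id (x : Fin n → F) : monomialMap LinearMap.id x = x :=
  funext fun i => character_single i x

@[simp]
theorem monomialMap_zero (x : Fin n → F) : monomialMap 0 x = 1 :=
  funext fun _ => character_zero x

@[simp]
theorem monomialMap_one : monomialMap A (1 : Fin n → F) = 1 :=
  funext fun _ => character_one _

theorem monomialMap_add (hx : x ∈ unitsSet F n) :
    monomialMap (A + B) x = monomialMap A x * monomialMap B x :=
  funext fun _ => character_add hx _ _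

theorem monomialMap_mul (x y : Fin n → F) :
    monomialMap A (x * y) = monomialMap A x * monomialMap A y :=
  funext fun _ => character_mul _ x y

theorem monomialMap_inv (x : Fin n → F) : monomialMap A x⁻¹ = (monomialMap A x)⁻¹ :=
  funext fun _ => character_inv _ x

theorem monomialMap_monomialMap (hx : x ∈ unitsSet F n) :
    monomialMap A (monomialMap B x) = monomialMap (B ∘ₗ A) x :=
  funext fun _ => character_monomialMap B hx _

end MonomialMap

noncomputable def laurentEval (f : (Fin n → ℤ) →₀ F) (x : Fin n → F) : F :=
  Finsupp.linearCombination F (fun z => character z x) f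

theorem exists_eval_eq_mul_laurentEval (f : (Fin n → ℤ) →₀ F) :
    ∃ (p : MvPolynomial (Fin n) F) (d : Fin n → ℕ), ∀ x ∈ unitsSet F n,
      MvPolynomial.eval x p = (∏ i, x i ^ d i) * laurentEval f x := by
  induction f using Finsupp.induction_linear with
  | zero => exact ⟨0, 0, by simp [laurentEval]⟩
  | add f g hf hg =>
    obtain ⟨p, d, hp⟩ := hf
    obtain ⟨q, e, hq⟩ := hg
    refine ⟨p * ∏ i, MvPolynomial.X i ^ e i + q * ∏ i, MvPolynomial.X i ^ d i, d + e,
      fun x hx => ?_⟩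
    simp only [laurentEval] at hp hq ⊢
    simp only [map_add, map_mul, map_prod, map_pow, MvPolynomial.eval_X, hp x hx, hq x hx,
      Pi.add_apply, pow_add, Finset.prod_mul_distrib]
    ring
  | single z a =>
    -- `x ^ z⁺ = x ^ (-z)⁺ * x ^ z`
    refine ⟨MvPolynomial.C a * ∏ i, MvPolynomial.X i ^ (z i).toNat, fun i => (-z i).toNat,
      fun x hx => ?_⟩
    simp only [map_mul, map_prod, map_pow, MvPolynomial.eval_X, MvPolynomial.eval_C, laurentEval,
      Finsupp.linearCombination_single, smul_eq_mul, character, mul_left_comm _ a,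
      ← Finset.prod_mul_distrib]
    congr 1
    refine Finset.prod_congr rfl fun i _ => ?_
    rw [← zpow_natCast, ← zpow_natCast, ← zpow_add₀ (hx i)]
    congr 1
    omega

theorem zarClosedIn_laurentEval_eq_zero (J : Set ((Fin n → ℤ) →₀ F)) :
    ZarClosedIn (unitsSet F n) (unitsSet F n ∩ {x | ∀ f ∈ J, laurentEval f x = 0}) := by
  choose p d hp using exists_eval_eq_mul_laurentEval (F := F) (n := n)
  refine ⟨_, ⟨p '' J, rfl⟩, ?_⟩
  ext x
  simp only [Set.mem_inter_iff, Set.mem_ofPred_eq, Set.forall_mem_image]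
  refine ⟨fun ⟨hx, h⟩ => ⟨fun f hf => by rw [hp f x hx, h f hf, mul_zero], hx⟩,
    fun ⟨h, hx⟩ => ⟨hx, fun f hf => ?_⟩⟩
  have := h hf
  rw [hp f x hx] at this
  exact (mul_eq_zero.1 this).resolve_left
    (Finset.prod_ne_zero_iff.2 fun i _ => pow_ne_zero _ (hx i))

theorem zarClosedIn_character_eq (z : Fin n → ℤ) (ζ : F) :
    ZarClosedIn (unitsSet F n) (unitsSet F n ∩ {x | character z x = ζ}) := by
  have hf (x : Fin n → F) :
      laurentEval (Finsupp.single z 1 - Finsupp.single 0 ζ) x = character z x - ζ := by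
    rw [laurentEval, map_sub, Finsupp.linearCombination_single, Finsupp.linearCombination_single]
    simp
  convert zarClosedIn_laurentEval_eq_zero {Finsupp.single z 1 - Finsupp.single 0 ζ} using 3
  ext x
  simp only [Set.mem_singleton_iff, forall_eq, hf, sub_eq_zero]

theorem exists_laurentEval_eq_eval_mul_monomialMap (c : Fin n → F)
    (A : (Fin n → ℤ) →ₗ[ℤ] Fin n → ℤ) (p : MvPolynomial (Fin n) F) :
    ∃ f : (Fin n → ℤ) →₀ F, ∀ x ∈ unitsSet F n,
      MvPolynomial.eval (c * monomialMap A x) p = laurentEval f x := by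
  refine ⟨∑ d ∈ p.support, Finsupp.single (A fun i => (d i : ℤ))
    (p.coeff d * character (fun i => (d i : ℤ)) c), fun x hx => ?_⟩
  simp only [MvPolynomial.eval_eq', laurentEval, map_sum, Finsupp.linearCombination_single,
    smul_eq_mul]
  refine Finset.sum_congr rfl fun d _ => ?_
  have hd : ∏ i, (c * monomialMap A x) i ^ d i =
      character (fun i => (d i : ℤ)) (c * monomialMap A x) := by
    simp [character]
  rw [hd, character_mul, character_monomialMap A hx, mul_assoc]

theorem zarContinuous_mul_monomialMap {c : Fin n → F} (hc : c ∈ unitsSet F n)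
    (A : (Fin n → ℤ) →ₗ[ℤ] Fin n → ℤ) :
    ZarContinuous (unitsSet F n) (fun x => c * monomialMap A x) := by
  rintro S ⟨V, ⟨I, rfl⟩, rfl⟩
  choose f hf using exists_laurentEval_eq_eval_mul_monomialMap c A
  convert zarClosedIn_laurentEval_eq_zero (f '' I) using 1
  ext x
  simp only [Set.mem_inter_iff, Set.mem_preimage, Set.mem_ofPred_eq, Set.forall_mem_image]
  constructor
  · rintro ⟨hx, h, -⟩
    exact ⟨hx, fun p hp => hf p x hx ▸ h p hp⟩
  · rintro ⟨hx, h⟩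
    exact ⟨hx, fun p hp => (hf p x hx).trans (h hp),
      fun i => mul_ne_zero (hc i) (monomialMap_mem_unitsSet A hx i)⟩

def charLattice (W : Set (Fin n → F)) (hW : W ⊆ unitsSet F n) : Submodule ℤ (Fin n → ℤ) where
  carrier := {z | ∀ w ∈ W, ∀ w' ∈ W, character z w = character z w'}
  add_mem' {z z'} hz hz' w hw w' hw' := by
    rw [character_add (hW hw), character_add (hW hw'), hz w hw w' hw', hz' w hw w' hw']
  zero_mem' := by simp
  smul_mem' k z hz w hw w' hw' := by rw [character_smul, character_smul, hz w hw w' hw']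

theorem charLattice_saturated {W : Set (Fin n → F)} (hWi : IrredIn (unitsSet F n) W)
    (hWc : ZarClosedIn (unitsSet F n) W) {k : ℤ} {z : Fin n → ℤ} (hk : k ≠ 0)
    (hkz : k • z ∈ charLattice W hWc.subset_s11) : z ∈ charLattice W hWc.subset_s11 := by
  classical
  obtain ⟨a, ha⟩ := hWi.1
  obtain ⟨m, hm, hpow⟩ : ∃ m : ℕ, 0 < m ∧ ∀ w ∈ W, character z w ^ m = character z a ^ m := by
    obtain ⟨m, rfl | rfl⟩ := Int.eq_nat_or_neg k <;> refine ⟨m, by omega, fun w hw => ?_⟩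
    · have h := hkz w hw a ha
      rwa [character_smul, character_smul, zpow_natCast, zpow_natCast] at h
    · have h := hkz w hw a ha
      rwa [character_smul, character_smul, zpow_neg, zpow_neg, inv_inj, zpow_natCast,
        zpow_natCast] at h
  have hcover : W ⊆ ⋃ ζ ∈ (Polynomial.nthRoots m (character z a ^ m)).toFinset,
      unitsSet F n ∩ {x | character z x = ζ} := fun w hw =>
    Set.mem_iUnion₂.2 ⟨character z w, by simp [Polynomial.mem_nthRoots hm, hpow w hw],
      hWc.subset_s11 hw, rfl⟩
  obtain ⟨ζ, -, hζ⟩ := hWi.exists_subset_of_subset_biUnion hWc _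
    (fun ζ _ => zarClosedIn_character_eq z ζ) hcover
  exact fun w hw w' hw' => (hζ hw).2.trans (hζ hw').2.symm

def latticeTorus (L : Submodule ℤ (Fin n → ℤ)) (a : Fin n → F) : Set (Fin n → F) :=
  {x | x ∈ unitsSet F n ∧ ∀ z ∈ L, character z x = character z a}

theorem isTorus_latticeTorus (L : Submodule ℤ (Fin n → ℤ)) {a : Fin n → F}
    (ha : a ∈ unitsSet F n) : IsTorus (latticeTorus L a) := by
  refine ⟨(fun z => (z, character z a)) '' L,
    Set.forall_mem_image.2 fun z _ => character_ne_zero z ha, ?_⟩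
  ext x
  simp [latticeTorus, character, unitsSet]

theorem subset_latticeTorus_charLattice {W : Set (Fin n → F)} (hW : W ⊆ unitsSet F n)
    {a : Fin n → F} (ha : a ∈ W) : W ⊆ latticeTorus (charLattice W hW) a :=
  fun w hw => ⟨hW hw, fun _ hz => hz w hw a ha⟩

theorem sInter_isTorus_eq {W : Set (Fin n → F)} (hW : W ⊆ unitsSet F n) {a : Fin n → F}
    (ha : a ∈ W) :
    ⋂₀ {S | IsTorus S ∧ W ⊆ S} = latticeTorus (charLattice W hW) a := by
  have hmem : latticeTorus (charLattice W hW) a ∈ {S | IsTorus S ∧ W ⊆ S} :=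
    ⟨isTorus_latticeTorus _ (hW ha), subset_latticeTorus_charLattice hW ha⟩
  refine (Set.sInter_subset_of_mem hmem).antisymm (Set.subset_sInter ?_)
  rintro S ⟨⟨E, -, rfl⟩, hWS⟩ x ⟨hx, hxL⟩
  refine ⟨hx, fun p hp => ?_⟩
  have hpW : ∀ w ∈ W, character p.1 w = p.2 := fun w hw => (hWS hw).2 p hp
  exact (hxL p.1 fun w hw w' hw' => (hpW w hw).trans (hpW w' hw').symm).trans (hpW a ha)

theorem IsTorus.eq_unitsSet {S X : Set (Fin n → F)} (hS : IsTorus S) (hXS : X ⊆ S)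
    (hX : X.Nonempty)
    (h : ∀ z : Fin n → ℤ, (∀ x ∈ X, ∀ x' ∈ X, character z x = character z x') →
      ∀ y ∈ unitsSet F n, character z y = 1) :
    S = unitsSet F n := by
  obtain ⟨E, -, rfl⟩ := hS
  obtain ⟨a, ha⟩ := hX
  refine Set.Subset.antisymm (fun x hx => hx.1) fun y hy => ?_
  refine ⟨hy, fun p hp => ?_⟩
  have hpX : ∀ x ∈ X, character p.1 x = p.2 := fun x hx => (hXS hx).2 p hp
  have h1 := h p.1 fun x hx x' hx' => (hpX x hx).trans (hpX x' hx').symm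
  change character p.1 y = p.2
  rw [h1 y hy, ← hpX a ha, h1 a (hXS ha).1]

theorem IrredIn.mul_image_monomialMap [Infinite F] {W : Set (Fin n → F)}
    (hW : IrredIn (unitsSet F n) W) (hWc : ZarClosedIn (unitsSet F n) W)
    (A : (Fin n → ℤ) →ₗ[ℤ] Fin n → ℤ) :
    IrredIn (unitsSet F n) (W * monomialMap A '' unitsSet F n) := by
  rw [← Set.image2_mul, Set.image2_image_right]
  refine hW.image2 hWc irredIn_unitsSet (ZarClosedIn.self _) (fun y hy => ?_)
    fun w hw => zarContinuous_mul_monomialMap (hWc.subset_s11 hw) A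
  convert zarContinuous_mul_monomialMap (monomialMap_mem_unitsSet A hy) LinearMap.id using 2
  rw [monomialMap_id, mul_comm]

def torusRetraction (P : (Fin n → ℤ) →ₗ[ℤ] Fin n → ℤ) (a x : Fin n → F) : Fin n → F :=
  monomialMap (LinearMap.id - P) a * monomialMap P x

section Retraction

variable {L : Submodule ℤ (Fin n → ℤ)} {P : (Fin n → ℤ) →ₗ[ℤ] Fin n → ℤ} {a : Fin n → F}

theorem id_sub_comp_eq_zero (hPL : ∀ z ∈ L, P z = 0) (hLP : ∀ z, z - P z ∈ L) :
    (LinearMap.id - P) ∘ₗ P = 0 := by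
  refine LinearMap.ext fun z => ?_
  have h := hPL _ (hLP z)
  rw [map_sub, sub_eq_zero] at h
  simp [← h]

theorem torusRetraction_eq_self (hLP : ∀ z, z - P z ∈ L) {x : Fin n → F}
    (hx : x ∈ latticeTorus L a) : torusRetraction P a x = x := by
  have h : monomialMap (LinearMap.id - P) a = monomialMap (LinearMap.id - P) x :=
    funext fun i => (hx.2 _ (hLP (Pi.single i 1))).symm
  rw [torusRetraction, h, ← monomialMap_add _ _ hx.1, sub_add_cancel, monomialMap_id]

theorem torusRetraction_mul_monomialMap (hPL : ∀ z ∈ L, P z = 0) (hLP : ∀ z, z - P z ∈ L)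
    (x : Fin n → F) {y : Fin n → F} (hy : y ∈ unitsSet F n) :
    torusRetraction P a (x * monomialMap (LinearMap.id - P) y) = torusRetraction P a x := by
  rw [torusRetraction, torusRetraction, monomialMap_mul, monomialMap_monomialMap _ _ hy,
    id_sub_comp_eq_zero hPL hLP, monomialMap_zero, mul_one]

theorem preimage_torusRetraction (hPL : ∀ z ∈ L, P z = 0) (hLP : ∀ z, z - P z ∈ L)
    {W : Set (Fin n → F)} (hWT : W ⊆ latticeTorus L a) (ha : a ∈ unitsSet F n) :
    unitsSet F n ∩ torusRetraction P a ⁻¹' W =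
      W * monomialMap (LinearMap.id - P) '' unitsSet F n := by
  ext x
  simp only [Set.mem_inter_iff, Set.mem_preimage, Set.mem_mul, Set.mem_image]
  constructor
  · rintro ⟨hx, hΨx⟩
    refine ⟨_, hΨx, _, ⟨x * a⁻¹, fun i => mul_ne_zero (hx i) (inv_ne_zero (ha i)), rfl⟩, ?_⟩
    have hsplit : monomialMap P x * monomialMap (LinearMap.id - P) x = x := by
      rw [← monomialMap_add _ _ hx, add_sub_cancel, monomialMap_id]
    have hQa := monomialMap_mem_unitsSet (LinearMap.id - P) ha
    funext i
    have hi := congrFun hsplit i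
    simp only [torusRetraction, monomialMap_mul, monomialMap_inv, Pi.mul_apply,
      Pi.inv_apply] at hi ⊢
    rw [← hi]
    field_simp [hQa i]
  · rintro ⟨w, hw, _, ⟨y, hy, rfl⟩, rfl⟩
    refine ⟨fun i => mul_ne_zero ((hWT hw).1 i) (monomialMap_mem_unitsSet _ hy i), ?_⟩
    rwa [torusRetraction_mul_monomialMap hPL hLP w hy, torusRetraction_eq_self hLP (hWT hw)]

theorem preimage_torusRetraction_inter_latticeTorus (hLP : ∀ z, z - P z ∈ L)
    {W : Set (Fin n → F)} (hWT : W ⊆ latticeTorus L a) :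
    unitsSet F n ∩ torusRetraction P a ⁻¹' W ∩ latticeTorus L a = W := by
  refine Set.Subset.antisymm (fun x ⟨⟨_, hΨx⟩, hxT⟩ => torusRetraction_eq_self hLP hxT ▸ hΨx)
    fun w hw => ⟨⟨(hWT hw).1, ?_⟩, hWT hw⟩
  rw [Set.mem_preimage, torusRetraction_eq_self hLP (hWT hw)]
  exact hw

end Retraction

theorem mul_image_monomialMap_not_subset_isTorus {W : Set (Fin n → F)} (hW : W ⊆ unitsSet F n)
    {a : Fin n → F} (ha : a ∈ W) {P : (Fin n → ℤ) →ₗ[ℤ] Fin n → ℤ}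
    (hPL : ∀ z ∈ charLattice W hW, P z = 0) :
    ¬ ∃ S, IsTorus S ∧ S ≠ unitsSet F n ∧
      W * monomialMap (LinearMap.id - P) '' unitsSet F n ⊆ S := by
  rintro ⟨S, hS, hSne, hWS⟩
  have hone : (1 : Fin n → F) ∈ unitsSet F n := fun _ => one_ne_zero
  have hmem : ∀ w ∈ W, ∀ y ∈ unitsSet F n,
      w * monomialMap (LinearMap.id - P) y ∈ W * monomialMap (LinearMap.id - P) '' unitsSet F n :=
    fun w hw y hy => Set.mul_mem_mul hw (Set.mem_image_of_mem _ hy)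
  refine hSne (hS.eq_unitsSet hWS ⟨_, hmem a ha 1 hone⟩ fun z hz y hy => ?_)
  have hPz : P z = 0 := hPL z fun w hw w' hw' => by
    simpa using hz _ (hmem w hw 1 hone) _ (hmem w' hw' 1 hone)
  have h := hz _ (hmem a ha y hy) _ (hmem a ha 1 hone)
  rw [monomialMap_one, mul_one, character_mul, character_monomialMap _ hy, LinearMap.sub_apply,
    LinearMap.id_apply, hPz, sub_zero] at h
  exact (mul_eq_left₀ (character_ne_zero z (hW ha))).1 h

end

/-- Every irreducible Zariski closed `W ⊆ (F*)^n` can be written as `W = W' ∩ T`, where `T` is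
the minimal torus containing `W` and `W'` is an irreducible Zariski closed set not contained in
any proper torus. -/
theorem decomposition_torus_part {F : Type*} [Field F] [IsAlgClosed F] {n : ℕ}
    (W : Set (Fin n → F)) (hWc : ZarClosedIn (unitsSet F n) W)
    (hWi : IrredIn (unitsSet F n) W) :
    ∃ W' : Set (Fin n → F), ZarClosedIn (unitsSet F n) W' ∧ IrredIn (unitsSet F n) W' ∧
      (¬ ∃ S : Set (Fin n → F), IsTorus S ∧ S ≠ unitsSet F n ∧ W' ⊆ S) ∧
      W = W' ∩ ⋂₀ {S : Set (Fin n → F) | IsTorus S ∧ W ⊆ S} := by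
  obtain ⟨a, ha⟩ := hWi.1
  have hW := hWc.subset_s11
  obtain ⟨P, hPL, hLP⟩ := (charLattice W hW).exists_projection_of_saturated
    fun _ _ hk hkz => charLattice_saturated hWi hWc hk hkz
  have hWT := subset_latticeTorus_charLattice hW ha
  have hW' := preimage_torusRetraction hPL hLP hWT (hW ha)
  refine ⟨unitsSet F n ∩ torusRetraction P a ⁻¹' W,
    zarContinuous_mul_monomialMap (monomialMap_mem_unitsSet _ (hW ha)) P W hWc, ?_, ?_, ?_⟩
  · rw [hW']
    exact hWi.mul_image_monomialMap hWc _
  · rw [hW']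
    exact mul_image_monomialMap_not_subset_isTorus hW ha hPL
  · rw [sInter_isTorus_eq hW ha, preimage_torusRetraction_inter_latticeTorus hLP hWT]
end

section
/- Let F, F' be algebraically closed fields with F' ⊆ F, and let W ⊆ F^n be a Zariski closed set defined by polynomials with coefficients in F'. If W ∩ (F')^n is irreducible as a Zariski closed subset of (F')^n, then W is irreducible in F^n. Equivalently: if an ideal ⟨f_1,...,f_r⟩ ⊆ F'[x_1,...,x_n] is prime, then the ideal generated by f_1,...,f_r in F[x_1,...,x_n] is prime. -/
/-!
Let `A = F'[X] ⧸ P`. By right exactness of `F ⊗[F'] -`, the quotient `F[X] ⧸ P F[X]` is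
`F ⊗[F'] A`, so it suffices that this ring is a domain. Expand tensors in an `F'`-basis of `F`,
with coefficients in `A`. Every `F'`-point `χ : A → F'` gives a ring map `F ⊗[F'] A → F` acting on
coefficients by `χ`; if `z * w = 0` then at each point all coefficients of `z` or all those of
`w` vanish. So a product of a coefficient of `z` and one of `w` vanishes at every point. By the
Nullstellensatz every maximal ideal of `A` is the kernel of a point, and `A` is a reduced
Jacobson ring, so that product is `0`; as `A` is a domain, `z = 0` or `w = 0`.
-/

open TensorProduct

section
variable {k A : Type*} [Field k] [IsAlgClosed k] [CommRing A] [Algebra k A]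
  [Algebra.FiniteType k A]

theorem Ideal.exists_algHom_ker_eq_of_isMaximal (m : Ideal A) [m.IsMaximal] :
    ∃ χ : A →ₐ[k] k, RingHom.ker χ = m := by
  let := Ideal.Quotient.field m
  have := finite_of_finite_type_of_isJacobsonRing k (A ⧸ m)
  let e : k ≃ₐ[k] A ⧸ m :=
    .ofBijective (Algebra.ofId k _) IsAlgClosed.algebraMap_bijective_of_isIntegral
  refine ⟨e.symm.toAlgHom.comp (Ideal.Quotient.mkₐ k m), ?_⟩
  ext a
  simp [RingHom.mem_ker, Ideal.Quotient.eq_zero_iff_mem]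

theorem Algebra.FiniteType.eq_zero_of_forall_algHom_apply_eq_zero [IsReduced A] {a : A}
    (h : ∀ χ : A →ₐ[k] k, χ a = 0) : a = 0 := by
  have := isJacobsonRing_of_finiteType (A := k) (B := A)
  rw [← Ideal.mem_bot, ← IsJacobsonRing.out' _ Ideal.isRadical_bot, Ideal.jacobson,
    Ideal.mem_sInf]
  rintro m ⟨-, hm⟩
  obtain ⟨χ, rfl⟩ := m.exists_algHom_ker_eq_of_isMaximal (k := k)
  exact h χ

end

namespace Algebra.TensorProduct

variable {k A K ι : Type*} [Field k] [CommRing A] [Algebra k A] [CommRing K] [Algebra k K]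

theorem repr_productMap_eq_mapRange (v : Module.Basis ι k K) (χ : A →ₐ[k] k) (z : A ⊗[k] K) :
    v.repr (productMap ((Algebra.ofId k K).comp χ) (AlgHom.id k K) z) =
      Finsupp.mapRange χ (map_zero χ) ((basis A v).repr z) := by
  induction z with
  | zero => simp
  | add x y hx hy => simp [hx, hy, Finsupp.mapRange_add (map_add χ)]
  | tmul a m =>
    ext i
    simp [← Algebra.smul_def]

theorem isDomain_of_isAlgClosed [IsAlgClosed k] [IsDomain A] [Algebra.FiniteType k A]
    [IsDomain K] : IsDomain (A ⊗[k] K) := by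
  let v := Module.Basis.ofVectorSpace k K
  let c := (basis A v).repr
  have h_of_ne_zero {x : A ⊗[k] K} (hx : x ≠ 0) : ∃ i, c x i ≠ 0 :=
    Finsupp.ne_iff.mp ((map_ne_zero_iff c c.injective).mpr hx)
  refine @NoZeroDivisors.to_isDomain _ _ inferInstance ⟨fun {z w} hzw ↦ ?_⟩
  by_contra! hne
  obtain ⟨i, hi⟩ := h_of_ne_zero hne.1
  obtain ⟨j, hj⟩ := h_of_ne_zero hne.2
  refine mul_ne_zero hi hj
    (Algebra.FiniteType.eq_zero_of_forall_algHom_apply_eq_zero (k := k) fun χ ↦ ?_)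
  let φ := productMap ((Algebra.ofId k K).comp χ) (AlgHom.id k K)
  have hcoeff {x : A ⊗[k] K} (hx : φ x = 0) (l) : χ (c x l) = 0 := by
    rw [← Finsupp.mapRange_apply (hf := map_zero χ), ← repr_productMap_eq_mapRange, hx,
      map_zero, Finsupp.zero_apply]
  have hφ : φ z * φ w = 0 := by rw [← map_mul, hzw, map_zero]
  rw [map_mul]
  rcases mul_eq_zero.mp hφ with h | h
  · rw [hcoeff h, zero_mul]
  · rw [hcoeff h, mul_zero]

end Algebra.TensorProduct

theorem Ideal.isPrime_map_includeRight_of_isAlgClosed {k A K : Type*} [Field k] [IsAlgClosed k]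
    [CommRing A] [Algebra k A] [Algebra.FiniteType k A] [CommRing K] [IsDomain K] [Algebra k K]
    (P : Ideal A) [P.IsPrime] :
    (P.map (Algebra.TensorProduct.includeRight : A →ₐ[k] K ⊗[k] A)).IsPrime := by
  have : IsDomain (K ⊗[k] (A ⧸ P)) :=
    have := Algebra.TensorProduct.isDomain_of_isAlgClosed (k := k) (A := A ⧸ P) (K := K)
    (Algebra.TensorProduct.comm k K (A ⧸ P)).toMulEquiv.isDomain _
  rw [← Ideal.Quotient.mkₐ_ker k P, ← AlgHom.ker_coe,
    ← Algebra.TensorProduct.lTensor_ker _ (Ideal.Quotient.mkₐ_surjective k P)]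
  exact RingHom.ker_isPrime _

theorem MvPolynomial.isPrime_map_map_of_isAlgClosed {k K σ : Type*} [Field k] [IsAlgClosed k]
    [CommRing K] [IsDomain K] [Algebra k K] [Finite σ] (P : Ideal (MvPolynomial σ k))
    [P.IsPrime] : (P.map (map (algebraMap k K))).IsPrime := by
  have hmap :
      (algebraTensorAlgEquiv (σ := σ) k K : K ⊗[k] MvPolynomial σ k →+* MvPolynomial σ K).comp
      (Algebra.TensorProduct.includeRight : MvPolynomial σ k →ₐ[k] K ⊗[k] _).toRingHom =
        map (algebraMap k K) :=
    RingHom.ext fun p ↦ by simp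
  have := P.isPrime_map_includeRight_of_isAlgClosed (k := k) (K := K)
  rw [← hmap, ← Ideal.map_map]
  exact Ideal.map_isPrime_of_equiv (algebraTensorAlgEquiv (σ := σ) k K)
    (I := P.map (Algebra.TensorProduct.includeRight : MvPolynomial σ k →ₐ[k] K ⊗[k] _))

theorem prime_ideal_scalar_extension_general {F' F : Type*} [Field F'] [Field F]
    [IsAlgClosed F'] [Algebra F' F] {n : ℕ}
    (s : Finset (MvPolynomial (Fin n) F'))
    (hp : (Ideal.span (s : Set (MvPolynomial (Fin n) F'))).IsPrime) :
    (Ideal.span ((MvPolynomial.map (algebraMap F' F)) '' (s : Set (MvPolynomial (Fin n) F')))).IsPrime := by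
  rw [← Ideal.map_span]
  exact MvPolynomial.isPrime_map_map_of_isAlgClosed _

/-- If `F' ⊆ F` are algebraically closed fields and `f₁,...,f_r ∈ F'[x₁,...,x_n]` generate a
prime ideal of `F'[x₁,...,x_n]`, then they generate a prime ideal of `F[x₁,...,x_n]`. -/
theorem prime_ideal_scalar_extension {F' F : Type*} [Field F'] [Field F]
    [IsAlgClosed F'] [IsAlgClosed F] [Algebra F' F] {n : ℕ}
    (s : Finset (MvPolynomial (Fin n) F'))
    (hp : (Ideal.span (s : Set (MvPolynomial (Fin n) F'))).IsPrime) :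
    (Ideal.span ((MvPolynomial.map (algebraMap F' F)) '' (s : Set (MvPolynomial (Fin n) F')))).IsPrime :=
  prime_ideal_scalar_extension_general s hp
end
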